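/- Let C be a conjugation on L²(𝕋) that commutes with M_{z²}, does not commute with M_z, and maps H² into itself. Then C = M_{[ξ_1,ξ_2]} J* where ξ_1(z) = a_0 + a_1 z and ξ_2(z) = a_1 \bar{z} + b_0 for constants a_0, a_1, b_0 ∈ ℂ satisfying |a_0|² + |a_1|² = 1, |b_0|² + |a_1|² = 1, and a_0\bar{a_1} + a_1\bar{b_0} = 0. -/

import Mathlib

open MeasureTheory Complex
open scoped Real

noncomputable section

instance : Fact (0 < 2 * Real.pi) := ⟨by positivity⟩

/-- The circle group, modeled as `ℝ / 2πℤ`. -/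
abbrev UnitCircle := AddCircle (2 * Real.pi)

/-- Normalized Lebesgue (Haar) measure on the circle. -/
abbrev hm : Measure UnitCircle := AddCircle.haarAddCircle

/-- `L²(𝕋)`. -/
abbrev L2T := Lp ℂ 2 hm

/-- The coordinate function `z` on the circle. -/
def zz : UnitCircle → ℂ := fun x => fourier 1 x

/-- The Hardy space `H²` inside `L²(𝕋)`: the closed span of `{z^n : n ≥ 0}`. -/
def Hardy : Submodule ℂ L2T :=
  (Submodule.span ℂ (Set.range fun n : ℕ => fourierLp 2 (n : ℤ))).topologicalClosure

/-- even part `f^e(z) = (f(z)+f(-z))/2` (`-z` corresponds to `x + π`). -/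
def evenPart (g : UnitCircle → ℂ) : UnitCircle → ℂ :=
  fun x => (g x + g (x + ((Real.pi : ℝ) : UnitCircle))) / 2

/-- odd part `f^o(z) = (f(z)-f(-z))/2`. -/
def oddPart (g : UnitCircle → ℂ) : UnitCircle → ℂ :=
  fun x => (g x - g (x + ((Real.pi : ℝ) : UnitCircle))) / 2

/-- A conjugation on `L²(𝕋)`: an antilinear involutive map with `⟪Cf, Cg⟫ = ⟪g, f⟫`. -/
structure IsConjugation (C : L2T → L2T) : Prop where
  map_add : ∀ f g, C (f + g) = C f + C g
  map_smul : ∀ (c : ℂ) (f), C (c • f) = (starRingEnd ℂ) c • C f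
  involutive : ∀ f, C (C f) = f
  inner_eq : ∀ f g, (inner ℂ (C f) (C g) : ℂ) = inner ℂ g f

/-- the subspace `θ^k · S` of `L²(𝕋)` (given as the span of the set of elements
a.e. equal to `θ^k f` with `f ∈ S`; this set is already a subspace). -/
def mulSub (θ : UnitCircle → ℂ) (k : ℤ) (S : Submodule ℂ L2T) : Submodule ℂ L2T :=
  Submodule.span ℂ {g : L2T | ∃ f ∈ S,
    (g : UnitCircle → ℂ) =ᵐ[hm] fun x => θ x ^ k * (f : UnitCircle → ℂ) x}

/-- `θ` is inner: `θ ∈ L²` with `|θ| = 1` a.e. and `θ ∈ H²`. -/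
def IsInner (θ : UnitCircle → ℂ) : Prop :=
  ∃ hθ : MemLp θ 2 hm, (∀ᵐ x ∂hm, ‖θ x‖ = 1) ∧ hθ.toLp θ ∈ Hardy

/-- The model space `K_θ = H² ⊖ θH²`. -/
def modelSpace (θ : UnitCircle → ℂ) : Submodule ℂ L2T :=
  Hardy ⊓ (mulSub θ 1 Hardy)ᗮ

/-- The operator `M_{[φ₁,φ₂]}` applied to a function: `φ₁ g^e + φ₂ g^o`. -/
def mul2 (φ1 φ2 g : UnitCircle → ℂ) : UnitCircle → ℂ :=
  fun x => φ1 x * evenPart g x + φ2 x * oddPart g x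

/-- `J* f (z) = conj (f (z̄))`; `z̄` corresponds to `-x`. -/
def jstar (f : UnitCircle → ℂ) : UnitCircle → ℂ :=
  fun y => (starRingEnd ℂ) (f (-y))

/-- Finite Blaschke product with zeros `lam 0, …, lam (n-1)`. -/
def blaschke (n : ℕ) (lam : Fin n → ℂ) : UnitCircle → ℂ :=
  fun x => ∏ k, (lam k - zz x) / (1 - (starRingEnd ℂ) (lam k) * zz x)

/-- The standard basis functions `e_j` of the model space `K_B`. -/
def blaschkeBasis (n : ℕ) (lam : Fin n → ℂ) (j : Fin n) : UnitCircle → ℂ :=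
  fun x => (∏ k ∈ Finset.univ.filter (fun k : Fin n => (k : ℕ) < (j : ℕ)),
      (lam k - zz x) / (1 - (starRingEnd ℂ) (lam k) * zz x)) *
    ((Real.sqrt (1 - ‖lam j‖ ^ 2) : ℂ) / (1 - (starRingEnd ℂ) (lam j) * zz x))

/-! In the Fourier basis `zⁿ` of `L²(𝕋)`, the matrix `⟪zⁿ, C zᵐ⟫` of `C` is invariant under
`(n, m) ↦ (n + 2, m + 2)`, because `C` commutes with `M_{z²}`, which shifts the basis by two
and whose adjoint shifts it back. It is symmetric, since `⟪f, C g⟫ = ⟪g, C f⟫` for a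
conjugation, and invariance of `H²` kills the entries with `n < 0 ≤ m`. Together these force
the matrix to be block diagonal, with the same block `[[a₀, a₁], [a₁, b₀]]` on every pair
`z^{2k}, z^{2k+1}`; its columns are orthonormal because `C` is isometric. On the other side,
the Fourier coefficients of `M_{[ξ₁,ξ₂]} J* f` are this same block applied to the conjugated
coefficients of `f`. -/

open ComplexConjugate AddCircle
open scoped InnerProductSpace

lemma inner_smul_add_smul_of_orthonormal {E : Type*} [NormedAddCommGroup E]
    [InnerProductSpace ℂ E] {u v : E} (hu : ⟪u, u⟫_ℂ = 1) (hv : ⟪v, v⟫_ℂ = 1)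
    (huv : ⟪u, v⟫_ℂ = 0) (a b c d : ℂ) :
    ⟪a • u + b • v, c • u + d • v⟫_ℂ = conj a * c + conj b * d := by
  simp only [inner_add_left, inner_add_right, inner_smul_left, inner_smul_right, hu, hv, huv,
    inner_eq_zero_symm.mp huv]
  ring

section FourierCoeff

variable {T : ℝ}

lemma fourier_neg_apply (n : ℤ) (x : AddCircle T) : fourier n (-x) = fourier (-n) x := by
  rw [fourier_apply, fourier_apply, smul_neg, neg_smul]

lemma fourier_apply_add (n : ℤ) (x y : AddCircle T) :
    fourier n (x + y) = fourier n x * fourier n y := by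
  simp [fourier_apply, smul_add, toCircle_add]

lemma norm_fourier_apply (n : ℤ) (x : AddCircle T) : ‖fourier n x‖ = 1 := by
  rw [fourier_apply, Circle.norm_coe]

variable [Fact (0 < T)]

lemma memLp_fourier_mul {w : AddCircle T → ℂ} {p : ENNReal} (hw : MemLp w p haarAddCircle)
    (k : ℤ) : MemLp (fun x => fourier k x * w x) p haarAddCircle :=
  hw.of_le (((map_continuous (fourier k)).aestronglyMeasurable).mul hw.aestronglyMeasurable)
    (Filter.Eventually.of_forall fun x => by rw [norm_mul, norm_fourier_apply, one_mul])

lemma fourierCoeff_add_apply {u v : AddCircle T → ℂ} (hu : Integrable u haarAddCircle)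
    (hv : Integrable v haarAddCircle) (n : ℤ) :
    fourierCoeff (fun x => u x + v x) n = fourierCoeff u n + fourierCoeff v n :=
  congrFun (fourierCoeff.add hu hv) n

lemma fourierCoeff_fourier_mul (k : ℤ) (w : AddCircle T → ℂ) (n : ℤ) :
    fourierCoeff (fun x => fourier k x * w x) n = fourierCoeff w (n - k) := by
  simp only [fourierCoeff, smul_eq_mul]
  congr 1 with x
  rw [show -(n - k) = -n + k by ring, fourier_add]
  ring

lemma fourierCoeff_comp_add_right (w : AddCircle T → ℂ) (a : AddCircle T) (n : ℤ) :
    fourierCoeff (fun x => w (x + a)) n = fourier n a * fourierCoeff w n := by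
  have key := integral_add_right_eq_self (μ := haarAddCircle)
    (fun y => fourier (-n) (y - a) * w y) a
  simp only [add_sub_cancel_right] at key
  simp only [fourierCoeff, smul_eq_mul]
  rw [key, ← integral_const_mul]
  congr 1 with y
  rw [sub_eq_add_neg, fourier_apply_add, fourier_neg_apply, neg_neg]
  ring

lemma fourierCoeff_conj_comp_neg (w : AddCircle T → ℂ) (n : ℤ) :
    fourierCoeff (fun x => conj (w (-x))) n = conj (fourierCoeff w n) := by
  have key := integral_neg_eq_self (fun y => fourier (-n) y * conj (w (-y))) haarAddCircle
  simp only [neg_neg] at key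
  simp only [fourierCoeff, smul_eq_mul]
  rw [← key, ← integral_conj]
  congr 1 with y
  rw [map_mul, fourier_neg_apply, ← fourier_neg, neg_neg]

end FourierCoeff

section EvenOdd

lemma fourier_pi (n : ℤ) : fourier n ((π : ℝ) : UnitCircle) = (-1 : ℂ) ^ n := by
  rw [fourier_coe_apply, show 2 * π * I * n * π / ((2 * π : ℝ) : ℂ) = n * (π * I) by
    have : (π : ℂ) ≠ 0 := by exact_mod_cast Real.pi_ne_zero
    push_cast
    field_simp]
  rw [Complex.exp_int_mul, Complex.exp_pi_mul_I]

lemma evenPart_eq (g : UnitCircle → ℂ) :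
    evenPart g = fun x => 2⁻¹ * (g x + g (x + (π : ℝ))) := by
  ext x
  rw [evenPart, div_eq_inv_mul]

lemma oddPart_eq (g : UnitCircle → ℂ) :
    oddPart g = fun x => 2⁻¹ * (g x + (-1) * g (x + (π : ℝ))) := by
  ext x
  rw [oddPart, div_eq_inv_mul]
  ring

variable {g : UnitCircle → ℂ}

lemma memLp_evenPart {p : ENNReal} (hg : MemLp g p hm) : MemLp (evenPart g) p hm := by
  rw [evenPart_eq]
  exact (hg.add (hg.comp_measurePreserving (measurePreserving_add_right hm _))).const_mul _

lemma memLp_oddPart {p : ENNReal} (hg : MemLp g p hm) : MemLp (oddPart g) p hm := by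
  rw [oddPart_eq]
  exact (hg.add ((hg.comp_measurePreserving
    (measurePreserving_add_right hm _)).const_mul _)).const_mul _

lemma fourierCoeff_evenPart (hg : Integrable g hm) (n : ℤ) :
    fourierCoeff (evenPart g) n = if Even n then fourierCoeff g n else 0 := by
  rw [evenPart_eq, fourierCoeff.const_mul, fourierCoeff_add_apply hg (hg.comp_add_right _),
    fourierCoeff_comp_add_right, fourier_pi]
  rcases Int.even_or_odd n with hn | hn
  · rw [hn.neg_one_zpow, if_pos hn]
    ring
  · rw [hn.neg_one_zpow, if_neg (Int.not_even_iff_odd.mpr hn)]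
    ring

lemma fourierCoeff_oddPart (hg : Integrable g hm) (n : ℤ) :
    fourierCoeff (oddPart g) n = if Even n then 0 else fourierCoeff g n := by
  rw [oddPart_eq, fourierCoeff.const_mul,
    fourierCoeff_add_apply hg ((hg.comp_add_right _).const_mul _), fourierCoeff.const_mul,
    fourierCoeff_comp_add_right, fourier_pi]
  rcases Int.even_or_odd n with hn | hn
  · rw [hn.neg_one_zpow, if_pos hn]
    ring
  · rw [hn.neg_one_zpow, if_neg (Int.not_even_iff_odd.mpr hn)]
    ring

lemma memLp_jstar {p : ENNReal} (hg : MemLp g p hm) : MemLp (jstar g) p hm :=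
  (hg.comp_measurePreserving (Measure.measurePreserving_neg hm)).star

lemma fourierCoeff_jstar (g : UnitCircle → ℂ) (n : ℤ) :
    fourierCoeff (jstar g) n = conj (fourierCoeff g n) :=
  fourierCoeff_conj_comp_neg g n

end EvenOdd

section Mul2

variable (a0 a1 b0 : ℂ)

local notation "ξ₁" => fun x => a0 + a1 * zz x
local notation "ξ₂" => fun x => a1 * conj (zz x) + b0

lemma mul2_eq (g : UnitCircle → ℂ) : mul2 ξ₁ ξ₂ g = fun x =>
    a0 * evenPart g x + a1 * (fourier 1 x * evenPart g x)
      + (a1 * (fourier (-1) x * oddPart g x) + b0 * oddPart g x) := by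
  ext x
  simp only [mul2, zz, fourier_neg]
  ring

variable {g : UnitCircle → ℂ}

lemma memLp_mul2 (hg : MemLp g 2 hm) : MemLp (mul2 ξ₁ ξ₂ g) 2 hm := by
  have he := memLp_evenPart hg
  have ho := memLp_oddPart hg
  rw [mul2_eq]
  exact ((he.const_mul _).add ((memLp_fourier_mul he 1).const_mul _)).add
    (((memLp_fourier_mul ho (-1)).const_mul _).add (ho.const_mul _))

lemma fourierCoeff_mul2 (hg : Integrable g hm) (n : ℤ) :
    fourierCoeff (mul2 ξ₁ ξ₂ g) n =
      a0 * fourierCoeff (evenPart g) n + a1 * fourierCoeff (evenPart g) (n - 1)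
        + (a1 * fourierCoeff (oddPart g) (n + 1) + b0 * fourierCoeff (oddPart g) n) := by
  have he : Integrable (evenPart g) hm :=
    memLp_one_iff_integrable.mp (memLp_evenPart (memLp_one_iff_integrable.mpr hg))
  have ho : Integrable (oddPart g) hm :=
    memLp_one_iff_integrable.mp (memLp_oddPart (memLp_one_iff_integrable.mpr hg))
  have i₁ : Integrable (fun x => a0 * evenPart g x) hm := he.const_mul _
  have i₂ : Integrable (fun x => a1 * (fourier 1 x * evenPart g x)) hm :=
    (he.fourier_smul 1).const_mul _
  have i₃ : Integrable (fun x => a1 * (fourier (-1) x * oddPart g x)) hm :=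
    (ho.fourier_smul (-1)).const_mul _
  have i₄ : Integrable (fun x => b0 * oddPart g x) hm := ho.const_mul _
  rw [mul2_eq, fourierCoeff_add_apply (u := fun x => _ + _) (v := fun x => _ + _)
      (i₁.add i₂) (i₃.add i₄), fourierCoeff_add_apply i₁ i₂, fourierCoeff_add_apply i₃ i₄,
    fourierCoeff.const_mul, fourierCoeff.const_mul, fourierCoeff.const_mul,
    fourierCoeff.const_mul, fourierCoeff_fourier_mul, fourierCoeff_fourier_mul, sub_neg_eq_add]

lemma fourierCoeff_mul2_two_mul (hg : Integrable g hm) (k : ℤ) :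
    fourierCoeff (mul2 ξ₁ ξ₂ g) (2 * k) =
      a0 * fourierCoeff g (2 * k) + a1 * fourierCoeff g (2 * k + 1) := by
  have h₀ : Even (2 * k) := even_two_mul k
  have h₁ : ¬ Even (2 * k + 1) := Int.not_even_iff_odd.mpr (odd_two_mul_add_one k)
  have h₃ : ¬ Even (2 * k - 1) := by
    rw [show 2 * k - 1 = 2 * (k - 1) + 1 by ring]
    exact Int.not_even_iff_odd.mpr (odd_two_mul_add_one _)
  simp only [fourierCoeff_mul2 _ _ _ hg, fourierCoeff_evenPart hg, fourierCoeff_oddPart hg,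
    if_pos h₀, if_neg h₁, if_neg h₃]
  ring

lemma fourierCoeff_mul2_two_mul_add_one (hg : Integrable g hm) (k : ℤ) :
    fourierCoeff (mul2 ξ₁ ξ₂ g) (2 * k + 1) =
      a1 * fourierCoeff g (2 * k) + b0 * fourierCoeff g (2 * k + 1) := by
  have h₀ : Even (2 * k) := even_two_mul k
  have h₁ : ¬ Even (2 * k + 1) := Int.not_even_iff_odd.mpr (odd_two_mul_add_one k)
  have h₂ : Even (2 * k + 1 + 1) := by
    rw [show 2 * k + 1 + 1 = 2 * (k + 1) by ring]
    exact even_two_mul _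
  simp only [fourierCoeff_mul2 _ _ _ hg, fourierCoeff_evenPart hg, fourierCoeff_oddPart hg,
    if_pos h₀, if_neg h₁, if_pos h₂, add_sub_cancel_right]
  ring

end Mul2

section FourierBasis

lemma inner_fourierLp (n : ℤ) (f : L2T) :
    ⟪fourierLp 2 n, f⟫_ℂ = fourierCoeff (f : UnitCircle → ℂ) n := by
  rw [← fourierBasis_repr, HilbertBasis.repr_apply_apply, coe_fourierBasis]

lemma inner_fourierLp_fourierLp (m n : ℤ) :
    ⟪(fourierLp 2 m : L2T), fourierLp 2 n⟫_ℂ = if m = n then 1 else 0 :=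
  orthonormal_iff_ite.mp orthonormal_fourier m n

lemma ext_inner_fourierLp {f g : L2T}
    (h : ∀ n, ⟪fourierLp 2 n, f⟫_ℂ = ⟪fourierLp 2 n, g⟫_ℂ) : f = g :=
  fourierBasis.repr.injective <| lp.ext <| funext fun n => by
    simp only [HilbertBasis.repr_apply_apply, coe_fourierBasis, h]

lemma ae_eq_of_fourierCoeff_eq (f : L2T) {G : UnitCircle → ℂ} (hG : MemLp G 2 hm)
    (h : ∀ n, fourierCoeff (f : UnitCircle → ℂ) n = fourierCoeff G n) :
    (f : UnitCircle → ℂ) =ᵐ[hm] G := by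
  have hf : f = hG.toLp G := ext_inner_fourierLp fun n => by
    rw [inner_fourierLp, inner_fourierLp, h, fourierCoeff_congr_ae hG.coeFn_toLp]
  exact hf ▸ hG.coeFn_toLp

lemma fourierLp_mem_Hardy {n : ℤ} (hn : 0 ≤ n) : fourierLp 2 n ∈ Hardy :=
  Submodule.le_topologicalClosure _ <| Submodule.subset_span ⟨n.toNat, by simp [hn]⟩

lemma inner_fourierLp_eq_zero_of_mem_Hardy {n : ℤ} (hn : n < 0) {g : L2T} (hg : g ∈ Hardy) :
    ⟪fourierLp 2 n, g⟫_ℂ = 0 := by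
  have hle : Hardy ≤ (innerSL ℂ (fourierLp 2 n : L2T)).ker := by
    refine Submodule.topologicalClosure_minimal _ ?_ (ContinuousLinearMap.isClosed_ker _)
    rw [Submodule.span_le]
    rintro _ ⟨m, rfl⟩
    simp only [SetLike.mem_coe, LinearMap.mem_ker, ContinuousLinearMap.coe_coe,
      innerSL_apply_apply, inner_fourierLp_fourierLp]
    exact if_neg (by omega)
  simpa using hle hg

end FourierBasis

section Shift

def IsMulZSq (S : L2T →L[ℂ] L2T) : Prop :=
  ∀ f : L2T, (S f : UnitCircle → ℂ) =ᵐ[hm] fun x => zz x ^ 2 * (f : UnitCircle → ℂ) x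

lemma zz_sq (x : UnitCircle) : zz x ^ 2 = fourier 2 x := by
  rw [zz, sq, ← fourier_add]
  rfl

variable {S : L2T →L[ℂ] L2T}

lemma IsMulZSq.apply_fourierLp (hS : IsMulZSq S) (n : ℤ) :
    S (fourierLp 2 n) = fourierLp 2 (n + 2) := by
  apply Lp.ext
  filter_upwards [hS (fourierLp 2 n), coeFn_fourierLp 2 n, coeFn_fourierLp 2 (n + 2)]
    with x hSx hn hn2
  rw [hSx, hn, hn2, zz_sq, add_comm, fourier_add]

lemma IsMulZSq.inner_fourierLp_add_two (hS : IsMulZSq S) (n : ℤ) (g : L2T) :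
    ⟪fourierLp 2 (n + 2), S g⟫_ℂ = ⟪fourierLp 2 n, g⟫_ℂ := by
  rw [inner_fourierLp, inner_fourierLp, fourierCoeff_congr_ae (hS g)]
  simp only [zz_sq, fourierCoeff_fourier_mul, add_sub_cancel_right]

end Shift

section Conjugation

variable {S : L2T →L[ℂ] L2T} {C : L2T → L2T}

lemma IsConjugation.inner_apply_comm (hC : IsConjugation C) (f g : L2T) :
    ⟪f, C g⟫_ℂ = ⟪g, C f⟫_ℂ := by
  simpa only [hC.involutive] using hC.inner_eq (C f) g

lemma inner_fourierLp_conj_add_two_mul (hS : IsMulZSq S) (hCS : ∀ f, C (S f) = S (C f))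
    (n m k : ℤ) :
    ⟪fourierLp 2 (n + 2 * k), C (fourierLp 2 (m + 2 * k))⟫_ℂ =
      ⟪fourierLp 2 n, C (fourierLp 2 m)⟫_ℂ := by
  have step : ∀ i j : ℤ, ⟪fourierLp 2 (i + 2), C (fourierLp 2 (j + 2))⟫_ℂ
      = ⟪fourierLp 2 i, C (fourierLp 2 j)⟫_ℂ := fun i j => by
    rw [← hS.apply_fourierLp j, hCS, hS.inner_fourierLp_add_two]
  induction k using Int.induction_on with
  | zero => simp
  | succ i ih => rw [← ih, mul_add_one, ← add_assoc, ← add_assoc, step]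
  | pred i ih => rw [← ih, ← step, mul_sub_one, add_assoc, add_assoc, sub_add_cancel]

lemma inner_fourierLp_conj_eq_zero_of_neg (hCH : ∀ f : L2T, f ∈ Hardy → C f ∈ Hardy)
    {n m : ℤ} (hn : n < 0) (hm : 0 ≤ m) : ⟪fourierLp 2 n, C (fourierLp 2 m)⟫_ℂ = 0 :=
  inner_fourierLp_eq_zero_of_mem_Hardy hn (hCH _ (fourierLp_mem_Hardy hm))

lemma inner_fourierLp_conj_eq_zero_of_two_le (hS : IsMulZSq S) (hC : IsConjugation C)
    (hCS : ∀ f, C (S f) = S (C f)) (hCH : ∀ f : L2T, f ∈ Hardy → C f ∈ Hardy)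
    {n m : ℤ} (hn : 2 ≤ n) (hm : m < 2) : ⟪fourierLp 2 n, C (fourierLp 2 m)⟫_ℂ = 0 := by
  have hshift := inner_fourierLp_conj_add_two_mul hS hCS (m - 2) (n - 2) 1
  rw [mul_one, sub_add_cancel, sub_add_cancel] at hshift
  rw [hC.inner_apply_comm, hshift]
  exact inner_fourierLp_conj_eq_zero_of_neg hCH (by omega) (by omega)

theorem conj_fourierLp_two_mul_add (hS : IsMulZSq S) (hC : IsConjugation C)
    (hCS : ∀ f, C (S f) = S (C f)) (hCH : ∀ f : L2T, f ∈ Hardy → C f ∈ Hardy)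
    {m : ℤ} (hm₀ : 0 ≤ m) (hm₁ : m < 2) (k : ℤ) :
    C (fourierLp 2 (2 * k + m)) =
      ⟪fourierLp 2 0, C (fourierLp 2 m)⟫_ℂ • fourierLp 2 (2 * k)
        + ⟪fourierLp 2 1, C (fourierLp 2 m)⟫_ℂ • fourierLp 2 (2 * k + 1) := by
  refine ext_inner_fourierLp fun n => ?_
  have hshift := inner_fourierLp_conj_add_two_mul hS hCS (n - 2 * k) m k
  rw [sub_add_cancel, add_comm m] at hshift
  rw [hshift, inner_add_right, inner_smul_right, inner_smul_right, inner_fourierLp_fourierLp,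
    inner_fourierLp_fourierLp]
  obtain h | h | h | h : n - 2 * k < 0 ∨ n - 2 * k = 0 ∨ n - 2 * k = 1 ∨ 2 ≤ n - 2 * k := by
    omega
  · rw [inner_fourierLp_conj_eq_zero_of_neg hCH h hm₀, if_neg (by omega), if_neg (by omega)]
    ring
  · rw [h, if_pos (by omega), if_neg (by omega)]
    ring
  · rw [h, if_neg (by omega), if_pos (by omega)]
    ring
  · rw [inner_fourierLp_conj_eq_zero_of_two_le hS hC hCS hCH h hm₁, if_neg (by omega),
      if_neg (by omega)]
    ring

theorem coeff_relations_of_conj_fourierLp (hC : IsConjugation C) {a0 a1 b0 : ℂ}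
    (h0 : C (fourierLp 2 0) = a0 • fourierLp 2 0 + a1 • fourierLp 2 1)
    (h1 : C (fourierLp 2 1) = a1 • fourierLp 2 0 + b0 • fourierLp 2 1) :
    ‖a0‖ ^ 2 + ‖a1‖ ^ 2 = 1 ∧ ‖b0‖ ^ 2 + ‖a1‖ ^ 2 = 1 ∧ a0 * conj a1 + a1 * conj b0 = 0 := by
  have inner_pair := inner_smul_add_smul_of_orthonormal (inner_fourierLp_fourierLp 0 0)
    (inner_fourierLp_fourierLp 1 1) (inner_fourierLp_fourierLp 0 1)
  have h00 := hC.inner_eq (fourierLp 2 0) (fourierLp 2 0)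
  have h11 := hC.inner_eq (fourierLp 2 1) (fourierLp 2 1)
  have h01 := hC.inner_eq (fourierLp 2 0) (fourierLp 2 1)
  rw [h0, inner_pair, inner_fourierLp_fourierLp, if_pos rfl, conj_mul', conj_mul'] at h00
  rw [h1, inner_pair, inner_fourierLp_fourierLp, if_pos rfl, conj_mul', conj_mul'] at h11
  rw [h0, h1, inner_pair, inner_fourierLp_fourierLp, if_neg one_ne_zero] at h01
  refine ⟨by exact_mod_cast h00, ?_, ?_⟩
  · rw [add_comm]
    exact_mod_cast h11
  · simpa using congrArg conj h01

lemma fourierCoeff_conj_apply (hC : IsConjugation C) {n p q : ℤ} {a b : ℂ}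
    (h : C (fourierLp 2 n) = a • fourierLp 2 p + b • fourierLp 2 q) (f : L2T) :
    fourierCoeff (C f : UnitCircle → ℂ) n =
      a * conj (fourierCoeff (f : UnitCircle → ℂ) p)
        + b * conj (fourierCoeff (f : UnitCircle → ℂ) q) := by
  rw [← inner_fourierLp, hC.inner_apply_comm, h, inner_add_right, inner_smul_right,
    inner_smul_right, ← inner_conj_symm f, ← inner_conj_symm f, inner_fourierLp, inner_fourierLp]

end Conjugation

theorem stmt_16_general (Mz2 : L2T →L[ℂ] L2T)
    (hMz2 : ∀ f : L2T, (Mz2 f : UnitCircle → ℂ) =ᵐ[hm]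
      fun x => zz x ^ 2 * (f : UnitCircle → ℂ) x)
    (C : L2T → L2T) (hC : IsConjugation C)
    (hcomm : ∀ f, C (Mz2 f) = Mz2 (C f))
    (hH : ∀ f : L2T, f ∈ Hardy → C f ∈ Hardy) :
    ∃ a0 a1 b0 : ℂ,
      ‖a0‖ ^ 2 + ‖a1‖ ^ 2 = 1 ∧ ‖b0‖ ^ 2 + ‖a1‖ ^ 2 = 1 ∧
      a0 * (starRingEnd ℂ) a1 + a1 * (starRingEnd ℂ) b0 = 0 ∧
      ∀ f : L2T, (C f : UnitCircle → ℂ) =ᵐ[hm]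
        mul2 (fun x => a0 + a1 * zz x) (fun x => a1 * (starRingEnd ℂ) (zz x) + b0)
          (jstar (f : UnitCircle → ℂ)) := by
  have heven := conj_fourierLp_two_mul_add hMz2 hC hcomm hH le_rfl two_pos
  have hodd := conj_fourierLp_two_mul_add hMz2 hC hcomm hH zero_le_one one_lt_two
  simp only [add_zero] at heven
  rw [hC.inner_apply_comm (fourierLp 2 0)] at hodd
  set a0 := ⟪(fourierLp 2 0 : L2T), C (fourierLp 2 0)⟫_ℂ
  set a1 := ⟪(fourierLp 2 1 : L2T), C (fourierLp 2 0)⟫_ℂ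
  set b0 := ⟪(fourierLp 2 1 : L2T), C (fourierLp 2 1)⟫_ℂ
  obtain ⟨hnorm₀, hnorm₁, horth⟩ :=
    coeff_relations_of_conj_fourierLp hC (by simpa using heven 0) (by simpa using hodd 0)
  refine ⟨a0, a1, b0, hnorm₀, hnorm₁, horth, fun f => ?_⟩
  have hf : MemLp (jstar (f : UnitCircle → ℂ)) 2 hm := memLp_jstar (Lp.memLp f)
  have hf₁ := hf.integrable one_le_two
  refine ae_eq_of_fourierCoeff_eq (C f) (memLp_mul2 a0 a1 b0 hf) fun n => ?_
  obtain ⟨k, rfl | rfl⟩ := Int.even_or_odd' n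
  · rw [fourierCoeff_conj_apply hC (heven k), fourierCoeff_mul2_two_mul _ _ _ hf₁,
      fourierCoeff_jstar, fourierCoeff_jstar]
  · rw [fourierCoeff_conj_apply hC (hodd k), fourierCoeff_mul2_two_mul_add_one _ _ _ hf₁,
      fourierCoeff_jstar, fourierCoeff_jstar]

/-- A conjugation commuting with `M_{z²}` but not with `M_z` that keeps `H²`
invariant has the form `M_{[ξ₁,ξ₂]} J*` with `ξ₁ = a₀ + a₁ z`,
`ξ₂ = a₁ z̄ + b₀` and the stated relations among `a₀, a₁, b₀`. -/
theorem stmt_16 (Mz Mz2 : L2T →L[ℂ] L2T)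
    (hMz : ∀ f : L2T, (Mz f : UnitCircle → ℂ) =ᵐ[hm]
      fun x => zz x * (f : UnitCircle → ℂ) x)
    (hMz2 : ∀ f : L2T, (Mz2 f : UnitCircle → ℂ) =ᵐ[hm]
      fun x => zz x ^ 2 * (f : UnitCircle → ℂ) x)
    (C : L2T → L2T) (hC : IsConjugation C)
    (hcomm : ∀ f, C (Mz2 f) = Mz2 (C f))
    (hnot : ¬ ∀ f, C (Mz f) = Mz (C f))
    (hH : ∀ f : L2T, f ∈ Hardy → C f ∈ Hardy) :
    ∃ a0 a1 b0 : ℂ,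
      ‖a0‖ ^ 2 + ‖a1‖ ^ 2 = 1 ∧ ‖b0‖ ^ 2 + ‖a1‖ ^ 2 = 1 ∧
      a0 * (starRingEnd ℂ) a1 + a1 * (starRingEnd ℂ) b0 = 0 ∧
      ∀ f : L2T, (C f : UnitCircle → ℂ) =ᵐ[hm]
        mul2 (fun x => a0 + a1 * zz x) (fun x => a1 * (starRingEnd ℂ) (zz x) + b0)
          (jstar (f : UnitCircle → ℂ)) :=
  stmt_16_general Mz2 hMz2 C hC hcomm hH
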